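/- Let T > 0 and let y : [0,T] → ℝ satisfy y(t) = y(0) + ∫₀ᵗ G(s) ds for all t ∈ [0,T], where G : [0,T] → ℝ is Lebesgue integrable. Let w : [0,T] → [0,1] be measurable and let z : [0,T] → ℝ satisfy z(t) = y(0) + ∫₀ᵗ max(G(s),0)·(1 − w(s)·𝟙_{ℝ₊}(z(s) − y(s))) ds for all t ∈ [0,T], where 𝟙_{ℝ₊}(ζ) = 1 if ζ ≥ 0 and 0 if ζ < 0. Then z is nondecreasing on [0,T], z(t) ≥ y(t) for all t ∈ [0,T], and z(T) ≥ sup_{t ∈ [0,T]} y(t). -/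

import Mathlib

/-!
Let `F ≥ 0` be the right-hand side of the equation for `z`, so `z` is nondecreasing and `z - y` is a
primitive of `F - G` vanishing at `0`. Where `z < y` the indicator vanishes, so `F = max G 0 ≥ G`
there: `z - y` cannot decrease while it is negative, hence it never becomes negative (it would have
to decrease after its last nonnegative point). Then `y t ≤ z t ≤ z T` for every `t ∈ [0, T]`.
-/

open MeasureTheory Set

section Primitive

variable {a b : ℝ} {f u : ℝ → ℝ}

theorem sub_eq_intervalIntegral_of_eq_add_integral (hf : IntegrableOn f (Icc a b))
    (hu : ∀ t ∈ Icc a b, u t = u a + ∫ s in a..t, f s) {s t : ℝ} (hs : s ∈ Icc a b)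
    (ht : t ∈ Icc a b) : u t - u s = ∫ r in s..t, f r := by
  have ha : a ∈ Icc a b := ⟨le_rfl, hs.1.trans hs.2⟩
  have hint : ∀ c ∈ Icc a b, IntervalIntegrable f volume a c := fun c hc =>
    (hf.mono_set (uIcc_subset_Icc ha hc)).intervalIntegrable
  rw [hu t ht, hu s hs, ← intervalIntegral.integral_interval_sub_left (hint t ht) (hint s hs)]
  ring

theorem continuousOn_of_eq_add_integral (hf : IntegrableOn f (Icc a b))
    (hu : ∀ t ∈ Icc a b, u t = u a + ∫ s in a..t, f s) : ContinuousOn u (Icc a b) := by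
  rcases le_or_gt a b with hab | hba
  · have hprim := intervalIntegral.continuousOn_primitive_interval (μ := volume) (a := a) (b := b)
      (f := f) (by rwa [uIcc_of_le hab])
    rw [uIcc_of_le hab] at hprim
    exact (continuousOn_const.add hprim).congr hu
  · simp [Icc_eq_empty_of_lt hba]

theorem monotoneOn_of_eq_add_integral (hf : IntegrableOn f (Icc a b))
    (hu : ∀ t ∈ Icc a b, u t = u a + ∫ s in a..t, f s) (hf_nonneg : ∀ s ∈ Icc a b, 0 ≤ f s) :
    MonotoneOn u (Icc a b) := by
  intro s hs t ht hst
  have hincr : 0 ≤ ∫ r in s..t, f r := intervalIntegral.integral_nonneg hst fun r hr =>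
    hf_nonneg r ⟨hs.1.trans hr.1, hr.2.trans ht.2⟩
  linarith [sub_eq_intervalIntegral_of_eq_add_integral hf hu hs ht]

theorem nonneg_of_eq_add_integral (hf : IntegrableOn f (Icc a b))
    (hu : ∀ t ∈ Icc a b, u t = u a + ∫ s in a..t, f s) (hua : 0 ≤ u a)
    (hf_nonneg : ∀ s ∈ Icc a b, u s < 0 → 0 ≤ f s) : ∀ t ∈ Icc a b, 0 ≤ u t := by
  intro t ht
  by_contra! hut
  have hsub : Icc a t ⊆ Icc a b := Icc_subset_Icc_right ht.2
  set S := Icc a t ∩ u ⁻¹' Ici 0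
  have hS_closed : IsClosed S :=
    ((continuousOn_of_eq_add_integral hf hu).mono hsub).preimage_isClosed_of_isClosed
      isClosed_Icc isClosed_Ici
  have hS_bdd : BddAbove S := ⟨t, fun s hs => hs.1.2⟩
  set τ := sSup S
  have hτS : τ ∈ S := hS_closed.csSup_mem ⟨a, ⟨le_rfl, ht.1⟩, hua⟩ hS_bdd
  have hτt : τ < t := lt_of_le_of_ne hτS.1.2 fun h => hut.not_ge (h ▸ hτS.2)
  have hneg : ∀ s ∈ Ioc τ t, u s < 0 := fun s hs => by
    by_contra! hus
    exact (le_csSup hS_bdd ⟨⟨hτS.1.1.trans hs.1.le, hs.2⟩, hus⟩).not_gt hs.1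
  have hτ : τ ∈ Icc a b := hsub hτS.1
  have hincr : 0 ≤ ∫ r in τ..t, f r := by
    rw [intervalIntegral.integral_of_le hτt.le]
    exact setIntegral_nonneg measurableSet_Ioc fun s hs =>
      hf_nonneg s ⟨hτ.1.trans hs.1.le, hs.2.trans ht.2⟩ (hneg s hs)
  have huτ : 0 ≤ u τ := hτS.2
  linarith [sub_eq_intervalIntegral_of_eq_add_integral hf hu hτ ht]

end Primitive

theorem stmt4_general (T : ℝ) (hT : 0 < T) (G : ℝ → ℝ) (hG : IntegrableOn G (Icc 0 T))
    (y : ℝ → ℝ) (hy : ∀ t ∈ Icc 0 T, y t = y 0 + ∫ s in (0:ℝ)..t, G s)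
    (w : ℝ → ℝ) (hw01 : ∀ t, w t ∈ Icc (0:ℝ) 1)
    (z : ℝ → ℝ)
    (hint : IntegrableOn
      (fun s => max (G s) 0 * (1 - w s * (if 0 ≤ z s - y s then (1:ℝ) else 0)))
      (Icc 0 T))
    (hz : ∀ t ∈ Icc 0 T, z t = y 0 +
      ∫ s in (0:ℝ)..t, max (G s) 0 * (1 - w s * (if 0 ≤ z s - y s then (1:ℝ) else 0))) :
    MonotoneOn z (Icc 0 T) ∧ (∀ t ∈ Icc 0 T, z t ≥ y t) ∧
      z T ≥ sSup (y '' Icc 0 T) := by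
  set F := fun s => max (G s) 0 * (1 - w s * (if 0 ≤ z s - y s then (1:ℝ) else 0))
  have h0 : (0:ℝ) ∈ Icc 0 T := ⟨le_rfl, hT.le⟩
  have hz0 : z 0 = y 0 := by simpa using hz 0 h0
  have hF_nonneg (s : ℝ) : 0 ≤ F s := by
    have : w s * (if 0 ≤ z s - y s then (1:ℝ) else 0) ≤ 1 := by
      split_ifs <;> linarith [(hw01 s).2]
    exact mul_nonneg (le_max_right _ _) (by linarith)
  have hz_mono : MonotoneOn z (Icc 0 T) :=
    monotoneOn_of_eq_add_integral hint (hz0 ▸ hz) fun s _ => hF_nonneg s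
  have hzy : ∀ t ∈ Icc 0 T, (z - y) t = (z - y) 0 + ∫ s in (0:ℝ)..t, (F - G) s := by
    intro t ht
    have hsub := uIcc_subset_Icc h0 ht
    simp only [Pi.sub_apply]
    rw [hz t ht, hy t ht, hz0, intervalIntegral.integral_sub
      ((hint.mono_set hsub).intervalIntegrable) ((hG.mono_set hsub).intervalIntegrable)]
    ring
  have hzy_nonneg := nonneg_of_eq_add_integral (hint.sub hG) hzy (by simp [hz0])
    fun s _ hs => by
      have hind : ¬ 0 ≤ z s - y s := not_le.mpr hs
      have hFs : F s = max (G s) 0 := by simp only [F, if_neg hind, mul_zero, sub_zero, mul_one]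
      rw [Pi.sub_apply, hFs, sub_nonneg]
      exact le_max_left _ _
  have hz_ge (t : ℝ) (ht : t ∈ Icc 0 T) : y t ≤ z t := sub_nonneg.mp (hzy_nonneg t ht)
  refine ⟨hz_mono, hz_ge, csSup_le ⟨y 0, 0, h0, rfl⟩ ?_⟩
  rintro _ ⟨t, ht, rfl⟩
  exact (hz_ge t ht).trans (hz_mono ht ⟨hT.le, le_rfl⟩ ht.2)

/-- lower bound in the proof of Proposition 4 of the paper: any
absolutely continuous solution of `ż = max(G,0)(1 - w·𝟙_{ℝ₊}(z-y))`, `z(0)=y(0)`,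
is nondecreasing, dominates `y` on `[0,T]`, and satisfies
`z(T) ≥ sup_{[0,T]} y`. Here `𝟙_{ℝ₊}(ζ) = 1` if `ζ ≥ 0` and `0` if `ζ < 0`. -/
theorem stmt4 (T : ℝ) (hT : 0 < T) (G : ℝ → ℝ) (hG : IntegrableOn G (Icc 0 T))
    (y : ℝ → ℝ) (hy : ∀ t ∈ Icc 0 T, y t = y 0 + ∫ s in (0:ℝ)..t, G s)
    (w : ℝ → ℝ) (hw : Measurable w) (hw01 : ∀ t, w t ∈ Icc (0:ℝ) 1)
    (z : ℝ → ℝ)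
    (hint : IntegrableOn
      (fun s => max (G s) 0 * (1 - w s * (if 0 ≤ z s - y s then (1:ℝ) else 0)))
      (Icc 0 T))
    (hz : ∀ t ∈ Icc 0 T, z t = y 0 +
      ∫ s in (0:ℝ)..t, max (G s) 0 * (1 - w s * (if 0 ≤ z s - y s then (1:ℝ) else 0))) :
    MonotoneOn z (Icc 0 T) ∧ (∀ t ∈ Icc 0 T, z t ≥ y t) ∧
      z T ≥ sSup (y '' Icc 0 T) :=
  stmt4_general T hT G hG y hy w hw01 z hint hz
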